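/- arXiv:2403.04536 — 4 statements merged into one kernel-verified Lean document; each statement's English description precedes it below -/
import Mathlib

section
/- Derivative of the log normalizing constant for a homogeneous prior (equation (3.7) of the paper): let d ≥ 1, q > 0, and let g : ℝ^d → [0, ∞) be Borel measurable and q-homogeneous, i.e. g(c·x) = c^q·g(x) for all c > 0 and x ∈ ℝ^d. Define Z(θ) := ∫_{ℝ^d} exp(−θ·g(x)) dx and assume 0 < Z(1) < ∞. Then for every θ > 0, the function θ ↦ log Z(θ) is differentiable at θ with derivative equal to −d/(q·θ). -/
open MeasureTheory Real

/-- Derivative of the log normalizing constant of a `q`-homogeneous prior: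
if `0 < Z(1) < ∞`, then for every `θ > 0`, `θ ↦ log Z(θ)` is differentiable with derivative
`−d/(qθ)`, where `Z(θ) = ∫_{ℝ^d} exp(−θ g(x)) dx`. -/
theorem homogeneous_logZ_deriv (d : ℕ) (hd : 1 ≤ d) (q : ℝ) (hq : 0 < q)
    (g : EuclideanSpace ℝ (Fin d) → ℝ) (hgmeas : Measurable g) (hg0 : ∀ x, 0 ≤ g x)
    (hghom : ∀ c : ℝ, 0 < c → ∀ x, g (c • x) = c ^ q * g x)
    (hZ1int : Integrable (fun x => Real.exp (-g x)))
    (hZ1pos : 0 < ∫ x, Real.exp (-g x)) :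
    ∀ θ : ℝ, 0 < θ →
      HasDerivAt (fun t : ℝ => Real.log (∫ x, Real.exp (-(t * g x))))
        (-((d : ℝ) / (q * θ))) θ := by
  set Z1 : ℝ := ∫ x, Real.exp (-g x) with hZ1
  have hfr : Module.finrank ℝ (EuclideanSpace ℝ (Fin d)) = d := by
    simp [finrank_euclideanSpace]
  -- Scaling identity for t > 0
  have key : ∀ t : ℝ, 0 < t →
      (∫ x, Real.exp (-(t * g x))) = t ^ (-((d : ℝ) / q)) * Z1 := by
    intro t ht
    set c : ℝ := t ^ (1 / q) with hc
    have hcpos : 0 < c := Real.rpow_pos_of_pos ht _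
    have hcq : c ^ q = t := by
      rw [hc, ← Real.rpow_mul ht.le, one_div, inv_mul_cancel₀ hq.ne', Real.rpow_one]
    have h1 : ∀ x, Real.exp (-(t * g x)) = (fun y => Real.exp (-g y)) (c • x) := by
      intro x
      simp [hghom c hcpos x, hcq]
    calc (∫ x, Real.exp (-(t * g x)))
        = ∫ x, (fun y => Real.exp (-g y)) (c • x) := by
          exact integral_congr_ae (Filter.Eventually.of_forall h1)
      _ = |(c ^ Module.finrank ℝ (EuclideanSpace ℝ (Fin d)))⁻¹| • Z1 :=
          MeasureTheory.Measure.integral_comp_smul volume (fun y => Real.exp (-g y)) c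
      _ = t ^ (-((d : ℝ) / q)) * Z1 := by
          rw [hfr, smul_eq_mul, abs_of_nonneg (by positivity)]
          congr 1
          rw [hc, ← Real.rpow_natCast (t ^ (1 / q)) d, ← Real.rpow_mul ht.le,
            ← Real.rpow_neg_one, ← Real.rpow_mul ht.le]
          ring_nf
  intro θ hθ
  have hlog : HasDerivAt (fun t : ℝ => (-((d : ℝ) / q)) * Real.log t + Real.log Z1)
      (-((d : ℝ) / (q * θ))) θ := by
    have := ((Real.hasDerivAt_log hθ.ne').const_mul (-((d : ℝ) / q))).add_const (Real.log Z1)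
    convert this using 1
    · rfl
    · rfl
    · ring
  refine hlog.congr_of_eventuallyEq ?_
  filter_upwards [eventually_gt_nhds hθ] with t ht
  rw [key t ht, Real.log_mul (by positivity) hZ1pos.ne', Real.log_rpow ht]
end

section
/- Prior expectation of a homogeneous regularizer: let d ≥ 1, q > 0, and let g : ℝ^d → [0, ∞) be Borel measurable and q-homogeneous, i.e. g(c·x) = c^q·g(x) for all c > 0 and x ∈ ℝ^d. Define Z(θ) := ∫_{ℝ^d} exp(−θ·g(x)) dx and assume 0 < Z(1) < ∞. Then for every θ > 0 the integral ∫_{ℝ^d} g(x)·exp(−θ·g(x)) dx is finite and equals (d/(q·θ))·Z(θ); equivalently, the expectation of g under the probability density x ↦ exp(−θ·g(x))/Z(θ) equals d/(q·θ). -/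
open MeasureTheory Real

lemma aux_mul_exp_le (u b : ℝ) (hu : 0 ≤ u) (hb : 0 < b) :
    u * Real.exp (-(b * u)) ≤ 1 / b := by
  have h1 : b * u ≤ Real.exp (b * u) := by
    nlinarith [Real.add_one_le_exp (b * u), mul_nonneg hb.le hu]
  have hE : 0 < Real.exp (b * u) := Real.exp_pos _
  rw [Real.exp_neg, ← div_eq_mul_inv, div_le_div_iff₀ hE hb]
  nlinarith

/-- Prior expectation of a `q`-homogeneous regularizer: if `0 < Z(1) < ∞`, then for every
`θ > 0`, `∫ g exp(−θ g)` is finite and equals `(d/(qθ))·Z(θ)`; equivalently, the expectation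
of `g` under the density `exp(−θ g)/Z(θ)` is `d/(qθ)`. -/
theorem homogeneous_prior_expectation (d : ℕ) (hd : 1 ≤ d) (q : ℝ) (hq : 0 < q)
    (g : EuclideanSpace ℝ (Fin d) → ℝ) (hgmeas : Measurable g) (hg0 : ∀ x, 0 ≤ g x)
    (hghom : ∀ c : ℝ, 0 < c → ∀ x, g (c • x) = c ^ q * g x)
    (hZ1int : Integrable (fun x => Real.exp (-g x)))
    (hZ1pos : 0 < ∫ x, Real.exp (-g x)) :
    ∀ θ : ℝ, 0 < θ →
      Integrable (fun x => g x * Real.exp (-(θ * g x))) ∧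
      ∫ x, g x * Real.exp (-(θ * g x)) =
        ((d : ℝ) / (q * θ)) * ∫ x, Real.exp (-(θ * g x)) ∧
      ∫ x, g x * (Real.exp (-(θ * g x)) / ∫ x', Real.exp (-(θ * g x'))) =
        (d : ℝ) / (q * θ) := by
  intro θ hθ
  set Z1 : ℝ := ∫ x, Real.exp (-g x) with hZ1def
  -- scaling lemma
  have key : ∀ c : ℝ, 0 < c →
      Integrable (fun x : EuclideanSpace ℝ (Fin d) => Real.exp (-(c * g x))) ∧
      (∫ x, Real.exp (-(c * g x))) = c ^ (-(d : ℝ)/q) * Z1 := by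
    intro c hc
    set s : ℝ := c ^ (-1/q : ℝ) with hsdef
    have hspos : 0 < s := Real.rpow_pos_of_pos hc _
    have hsq : s ^ q = c⁻¹ := by
      rw [hsdef, ← Real.rpow_mul hc.le]
      have : -1 / q * q = -1 := by field_simp
      rw [this, Real.rpow_neg_one]
    have hcomp : ∀ y : EuclideanSpace ℝ (Fin d),
        Real.exp (-(c * g (s • y))) = Real.exp (-g y) := by
      intro y
      rw [hghom s hspos y, hsq, mul_inv_cancel_left₀ hc.ne']
    have hint1 : Integrable
        (fun y : EuclideanSpace ℝ (Fin d) =>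
          (fun x => Real.exp (-(c * g x))) (s • y)) := by
      simpa only [hcomp] using hZ1int
    have hint : Integrable (fun x : EuclideanSpace ℝ (Fin d) => Real.exp (-(c * g x))) :=
      (integrable_comp_smul_iff volume _ hspos.ne').mp hint1
    refine ⟨hint, ?_⟩
    have hscale := Measure.integral_comp_smul_of_nonneg (μ := volume)
      (fun x : EuclideanSpace ℝ (Fin d) => Real.exp (-(c * g x))) s (hR := hspos.le)
    have hfr : Module.finrank ℝ (EuclideanSpace ℝ (Fin d)) = d := by
      simp [finrank_euclideanSpace]
    rw [hfr] at hscale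
    simp only [hcomp, smul_eq_mul] at hscale
    have hsd : (s : ℝ) ^ d = c ^ (-(d : ℝ)/q) := by
      rw [hsdef, ← Real.rpow_natCast (c ^ (-1/q : ℝ)) d, ← Real.rpow_mul hc.le]
      ring_nf
    rw [← hZ1def] at hscale
    rw [← hsd]
    have hsdpos : (0:ℝ) < s ^ d := pow_pos hspos d
    field_simp at hscale ⊢
    linarith [hscale]
  obtain ⟨hZθint, hZθeq⟩ := key θ hθ
  obtain ⟨hZ4int, _⟩ := key (θ/4) (by positivity)
  have hZθpos : 0 < ∫ x, Real.exp (-(θ * g x)) := by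
    rw [hZθeq]; exact mul_pos (Real.rpow_pos_of_pos hθ _) hZ1pos
  -- differentiate under the integral
  have hderiv := hasDerivAt_integral_of_dominated_loc_of_deriv_le (μ := volume)
    (F := fun (t : ℝ) (a : EuclideanSpace ℝ (Fin d)) => Real.exp (-(t * g a)))
    (F' := fun (t : ℝ) (a : EuclideanSpace ℝ (Fin d)) => -(g a * Real.exp (-(t * g a))))
    (x₀ := θ) (s := Metric.ball θ (θ/2))
    (bound := fun a => (4/θ) * Real.exp (-(θ/4 * g a)))
    (Metric.ball_mem_nhds θ (by positivity))
    (Filter.Eventually.of_forall fun t =>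
      ((hgmeas.const_mul t).neg.exp).aestronglyMeasurable)
    hZθint
    ((hgmeas.mul ((hgmeas.const_mul θ).neg.exp)).neg.aestronglyMeasurable)
    (Filter.Eventually.of_forall ?_)
    (hZ4int.const_mul (4/θ))
    (Filter.Eventually.of_forall ?_)
  rotate_left
  · -- bound
    intro a t ht
    rw [Metric.mem_ball, Real.dist_eq, abs_sub_lt_iff] at ht
    have htpos : θ/2 < t := by linarith [ht.2]
    have h0 : ‖-(g a * Real.exp (-(t * g a)))‖ = g a * Real.exp (-(t * g a)) := by
      rw [norm_neg, Real.norm_eq_abs, abs_of_nonneg (mul_nonneg (hg0 a) (Real.exp_pos _).le)]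
    rw [h0]
    have h1 : g a * Real.exp (-(t * g a)) ≤ g a * Real.exp (-(θ/2 * g a)) := by
      apply mul_le_mul_of_nonneg_left _ (hg0 a)
      apply Real.exp_le_exp.2
      apply neg_le_neg
      exact mul_le_mul_of_nonneg_right htpos.le (hg0 a)
    have h2 : Real.exp (-(θ/2 * g a)) =
        Real.exp (-(θ/4 * g a)) * Real.exp (-(θ/4 * g a)) := by
      rw [← Real.exp_add]; ring_nf
    have h3 : g a * Real.exp (-(θ/4 * g a)) ≤ 4/θ := by
      have := aux_mul_exp_le (g a) (θ/4) (hg0 a) (by positivity)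
      calc g a * Real.exp (-(θ/4 * g a)) = g a * Real.exp (-(θ/4 * g a)) := rfl
        _ ≤ 1 / (θ/4) := this
        _ = 4/θ := by field_simp
    calc g a * Real.exp (-(t * g a)) ≤ g a * Real.exp (-(θ/2 * g a)) := h1
      _ = (g a * Real.exp (-(θ/4 * g a))) * Real.exp (-(θ/4 * g a)) := by
          rw [h2]; ring
      _ ≤ (4/θ) * Real.exp (-(θ/4 * g a)) :=
          mul_le_mul_of_nonneg_right h3 (Real.exp_pos _).le
  · -- differentiability
    intro a t _
    have h1 : HasDerivAt (fun t : ℝ => -(t * g a)) (-(g a)) t :=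
      (hasDerivAt_mul_const (g a)).neg
    have h2 := h1.exp
    simpa [mul_comm, mul_neg, neg_mul] using h2
  obtain ⟨hint', hD1⟩ := hderiv
  -- the other derivative from the scaling identity
  have hD2 : HasDerivAt (fun t : ℝ => ∫ x, Real.exp (-(t * g x)))
      ((-(d : ℝ)/q) * θ ^ ((-(d : ℝ)/q) - 1) * Z1) θ := by
    have hF2 : HasDerivAt (fun t : ℝ => t ^ (-(d : ℝ)/q) * Z1)
        ((-(d : ℝ)/q) * θ ^ ((-(d : ℝ)/q) - 1) * Z1) θ :=
      (Real.hasDerivAt_rpow_const (Or.inl hθ.ne')).mul_const Z1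
    apply hF2.congr_of_eventuallyEq
    filter_upwards [Ioi_mem_nhds hθ] with t ht
    exact (key t ht).2
  have huniq := hD1.unique hD2
  rw [integral_neg] at huniq
  have hval : ∫ x, g x * Real.exp (-(θ * g x)) =
      ((d : ℝ)/q) * θ ^ ((-(d : ℝ)/q) - 1) * Z1 := by
    have := neg_eq_iff_eq_neg.mp huniq
    rw [this]; ring
  have hInt : Integrable (fun x => g x * Real.exp (-(θ * g x))) := by
    refine hint'.neg.congr (Filter.Eventually.of_forall fun x => ?_)
    simp
  have hpow : θ ^ ((-(d : ℝ)/q) - 1) = θ ^ (-(d : ℝ)/q) / θ := by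
    rw [Real.rpow_sub hθ, Real.rpow_one]
  have hmain : ∫ x, g x * Real.exp (-(θ * g x)) =
      ((d : ℝ) / (q * θ)) * ∫ x, Real.exp (-(θ * g x)) := by
    rw [hval, hZθeq, hpow]
    field_simp
  refine ⟨hInt, hmain, ?_⟩
  have hrw : (fun x => g x * (Real.exp (-(θ * g x)) / ∫ x', Real.exp (-(θ * g x')))) =
      fun x => (g x * Real.exp (-(θ * g x))) / ∫ x', Real.exp (-(θ * g x')) := by
    funext x; rw [mul_div_assoc]
  rw [hrw, integral_div, hmain, mul_div_assoc, div_self hZθpos.ne', mul_one]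
end

section
/- Gradient of the log marginal likelihood in the regularisation parameter (equation (3.1) combined with (3.7)): let d ≥ 1, y ∈ ℝ^d, let H : ℝ^d → ℝ^d be linear, σ² > 0, and set f(x) := ‖y − H x‖²/(2σ²). Let q > 0 and let g : ℝ^d → [0, ∞) be Borel measurable and q-homogeneous (g(c·x) = c^q·g(x) for all c > 0, x ∈ ℝ^d), with 0 < Z(1) < ∞ where Z(θ) := ∫_{ℝ^d} exp(−θ·g(x)) dx. For θ > 0 define M(θ) := ∫_{ℝ^d} exp(−f(x) − θ·g(x)) dx and the marginal likelihood p(y|θ) := (2πσ²)^{−d/2}·M(θ)/Z(θ). Then for every θ > 0 one has 0 < M(θ) < ∞, and the function θ ↦ log p(y|θ) is differentiable at θ with derivative d/(q·θ) − ∫_{ℝ^d} g(x)·π_θ(x) dx, where π_θ(x) := exp(−f(x) − θ·g(x))/M(θ) is the posterior density; i.e. ∇_θ log p(y|θ) = d/(q·θ) − E_{x∼π_θ}[g(x)]. -/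
open MeasureTheory Real

/-- Gradient of the log marginal likelihood in the regularisation parameter:
for the model with likelihood `∝ exp(−‖y − Hx‖²/(2σ²))` and `q`-homogeneous prior
`exp(−θg)/Z(θ)`, one has `∇_θ log p(y|θ) = d/(qθ) − E_{posterior}[g]` for every `θ > 0`. -/
theorem theta_grad_log_marginal (d : ℕ) (hd : 1 ≤ d)
    (y : EuclideanSpace ℝ (Fin d))
    (H : EuclideanSpace ℝ (Fin d) →ₗ[ℝ] EuclideanSpace ℝ (Fin d))
    (σ2 : ℝ) (hσ2 : 0 < σ2) (q : ℝ) (hq : 0 < q)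
    (g : EuclideanSpace ℝ (Fin d) → ℝ) (hgmeas : Measurable g) (hg0 : ∀ x, 0 ≤ g x)
    (hghom : ∀ c : ℝ, 0 < c → ∀ x, g (c • x) = c ^ q * g x)
    (hZ1int : Integrable (fun x => Real.exp (-g x)))
    (hZ1pos : 0 < ∫ x, Real.exp (-g x)) :
    ∀ θ : ℝ, 0 < θ →
      Integrable (fun x => Real.exp (-(‖y - H x‖ ^ 2 / (2 * σ2)) - θ * g x)) ∧
      0 < ∫ x, Real.exp (-(‖y - H x‖ ^ 2 / (2 * σ2)) - θ * g x) ∧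
      HasDerivAt
        (fun t : ℝ => Real.log ((2 * π * σ2) ^ (-(d : ℝ) / 2) *
          (∫ x, Real.exp (-(‖y - H x‖ ^ 2 / (2 * σ2)) - t * g x)) /
          ∫ x, Real.exp (-(t * g x))))
        ((d : ℝ) / (q * θ) -
          ∫ x, g x * (Real.exp (-(‖y - H x‖ ^ 2 / (2 * σ2)) - θ * g x) /
            ∫ x', Real.exp (-(‖y - H x'‖ ^ 2 / (2 * σ2)) - θ * g x'))) θ := by
  intro θ hθ
  have hHc : Continuous H := H.continuous_of_finiteDimensional
  set f : EuclideanSpace ℝ (Fin d) → ℝ := fun x => ‖y - H x‖ ^ 2 / (2 * σ2) with hfdef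
  have hfc : Continuous f := ((continuous_const.sub hHc).norm.pow 2).div_const _
  have hf0 : ∀ x, 0 ≤ f x := fun x => div_nonneg (by positivity) (by positivity)
  have hdim : Module.finrank ℝ (EuclideanSpace ℝ (Fin d)) = d := finrank_euclideanSpace_fin
  -- scaling key lemma
  have key : ∀ c : ℝ, 0 < c →
      Integrable (fun x : EuclideanSpace ℝ (Fin d) => Real.exp (-(c * g x))) ∧
      ∫ x, Real.exp (-(c * g x)) = c ^ (-((d : ℝ) / q)) * ∫ x, Real.exp (-g x) := by
    intro c hc
    set R : ℝ := c ^ (1 / q) with hRdef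
    have hRpos : 0 < R := Real.rpow_pos_of_pos hc _
    have hRq : R ^ q = c := by
      rw [hRdef, ← Real.rpow_mul hc.le, one_div_mul_cancel hq.ne', Real.rpow_one]
    have hcomp : (fun x : EuclideanSpace ℝ (Fin d) => Real.exp (-(c * g x)))
        = (fun x => Real.exp (-g (R • x))) := by
      funext x
      rw [hghom R hRpos x, hRq]
    have hRd : (R ^ Module.finrank ℝ (EuclideanSpace ℝ (Fin d)))⁻¹ = c ^ (-((d : ℝ) / q)) := by
      rw [hdim, ← Real.rpow_natCast R d, hRdef, ← Real.rpow_mul hc.le,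
        ← Real.rpow_neg hc.le]
      congr 1
      field_simp
    constructor
    · rw [hcomp]
      exact (integrable_comp_smul_iff volume (fun x => Real.exp (-g x)) hRpos.ne').mpr hZ1int
    · rw [hcomp, MeasureTheory.Measure.integral_comp_smul volume (fun x => Real.exp (-g x)) R,
        abs_of_nonneg (inv_nonneg.2 (pow_nonneg hRpos.le _)), hRd, smul_eq_mul]
  -- integrability and positivity of M(t)
  have hMint : ∀ t : ℝ, 0 < t →
      Integrable (fun x => Real.exp (-f x - t * g x)) := by
    intro t ht
    refine ((key t ht).1).mono ?_ ?_
    · exact ((hfc.measurable.neg.sub (measurable_const.mul hgmeas)).exp).aestronglyMeasurable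
    · filter_upwards with x
      rw [Real.norm_eq_abs, Real.norm_eq_abs, abs_of_pos (Real.exp_pos _),
        abs_of_pos (Real.exp_pos _)]
      apply Real.exp_le_exp.2
      have := hf0 x
      linarith
  have hMpos : ∀ t : ℝ, 0 < t → 0 < ∫ x, Real.exp (-f x - t * g x) := by
    intro t ht
    exact integral_exp_pos (hMint t ht)
  refine ⟨hMint θ hθ, hMpos θ hθ, ?_⟩
  -- derivative of M
  set F : ℝ → EuclideanSpace ℝ (Fin d) → ℝ := fun t x => Real.exp (-f x - t * g x) with hF
  set F' : ℝ → EuclideanSpace ℝ (Fin d) → ℝ :=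
    fun t x => Real.exp (-f x - t * g x) * (-(g x)) with hF'
  have hderivM : Integrable (F' θ) ∧
      HasDerivAt (fun t => ∫ x, F t x) (∫ x, F' θ x) θ := by
    apply hasDerivAt_integral_of_dominated_loc_of_deriv_le (s := Metric.ball θ (θ / 2)) (Metric.ball_mem_nhds θ (by positivity))
      (bound := fun x => (4 / θ) * Real.exp (-(θ / 4 * g x)))
    · filter_upwards with t
      exact ((hfc.measurable.neg.sub (measurable_const.mul hgmeas)).exp).aestronglyMeasurable
    · exact hMint θ hθ
    · exact (((hfc.measurable.neg.sub (measurable_const.mul hgmeas)).exp).mul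
        hgmeas.neg).aestronglyMeasurable
    · filter_upwards with x t ht
      have ht2 : θ / 2 ≤ t := by
        rw [Metric.mem_ball, Real.dist_eq, abs_lt] at ht
        linarith [ht.1]
      have h2 : Real.exp (-f x - t * g x) ≤ Real.exp (-(θ / 2 * g x)) := by
        apply Real.exp_le_exp.2
        have h3 : θ / 2 * g x ≤ t * g x := mul_le_mul_of_nonneg_right ht2 (hg0 x)
        have := hf0 x
        linarith
      have h1 : g x ≤ 4 / θ * Real.exp (θ / 4 * g x) := by
        have h4 : θ / 4 * g x ≤ Real.exp (θ / 4 * g x) := by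
          have := Real.add_one_le_exp (θ / 4 * g x)
          linarith
        rw [div_mul_eq_mul_div, le_div_iff₀ hθ]
        nlinarith [Real.exp_pos (θ / 4 * g x)]
      have hnorm : ‖F' t x‖ = g x * Real.exp (-f x - t * g x) := by
        rw [hF']
        simp only [Real.norm_eq_abs, abs_mul, abs_neg, abs_of_nonneg (hg0 x),
          abs_of_pos (Real.exp_pos _)]
        ring
      rw [hnorm]
      calc g x * Real.exp (-f x - t * g x)
          ≤ (4 / θ * Real.exp (θ / 4 * g x)) * Real.exp (-(θ / 2 * g x)) :=
            mul_le_mul h1 h2 (Real.exp_pos _).le (by positivity)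
        _ = 4 / θ * Real.exp (θ / 4 * g x + -(θ / 2 * g x)) := by
            rw [mul_assoc, ← Real.exp_add]
        _ = 4 / θ * Real.exp (-(θ / 4 * g x)) := by ring_nf
    · exact ((key (θ / 4) (by positivity)).1).const_mul _
    · filter_upwards with x t ht
      exact ((hasDerivAt_mul_const (g x)).const_sub (-f x)).exp
  obtain ⟨hF'int, hM⟩ := hderivM
  set Mθ : ℝ := ∫ x, F θ x with hMθ
  have hMθpos : 0 < Mθ := hMpos θ hθ
  set C : ℝ := (2 * π * σ2) ^ (-(d : ℝ) / 2) with hC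
  have hCpos : 0 < C := Real.rpow_pos_of_pos (by positivity) _
  set Z1 : ℝ := ∫ x, Real.exp (-g x) with hZ1
  -- the nicer representation
  set L : ℝ → ℝ := fun t => Real.log C + Real.log (∫ x, F t x)
      + (d : ℝ) / q * Real.log t - Real.log Z1 with hL
  have hLd : HasDerivAt L ((∫ x, F' θ x) / Mθ + (d : ℝ) / q * θ⁻¹) θ := by
    have h1 : HasDerivAt (fun t => Real.log C + Real.log (∫ x, F t x))
        ((∫ x, F' θ x) / Mθ) θ := (hM.log hMθpos.ne').const_add _
    have h2 : HasDerivAt (fun t : ℝ => (d : ℝ) / q * Real.log t) ((d : ℝ) / q * θ⁻¹) θ :=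
      (Real.hasDerivAt_log hθ.ne').const_mul _
    exact (h1.add h2).sub_const _
  have hev : (fun t : ℝ => Real.log (C * (∫ x, F t x) / ∫ x, Real.exp (-(t * g x))))
      =ᶠ[nhds θ] L := by
    filter_upwards [eventually_gt_nhds hθ] with t ht
    have hZt := (key t ht).2
    have hZtpos : 0 < ∫ x, Real.exp (-(t * g x)) := by
      rw [hZt]; positivity
    have hMt : 0 < ∫ x, F t x := hMpos t ht
    rw [hL, Real.log_div (by positivity) hZtpos.ne', Real.log_mul hCpos.ne' hMt.ne',
      hZt, Real.log_mul (by positivity) hZ1pos.ne', Real.log_rpow ht]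
    ring
  have hfinal : HasDerivAt
      (fun t : ℝ => Real.log (C * (∫ x, F t x) / ∫ x, Real.exp (-(t * g x))))
      ((∫ x, F' θ x) / Mθ + (d : ℝ) / q * θ⁻¹) θ := hLd.congr_of_eventuallyEq hev
  convert hfinal using 1
  have h5 : ∫ x, F' θ x = -∫ x, g x * Real.exp (-f x - θ * g x) := by
    rw [← integral_neg]
    congr 1
    funext x
    rw [hF']
    ring
  have h6 : (∫ x, g x * (Real.exp (-f x - θ * g x) / Mθ))
      = (∫ x, g x * Real.exp (-f x - θ * g x)) / Mθ := by
    rw [← integral_div]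
    congr 1
    funext x
    ring
  rw [h6, h5]
  field_simp
  ring
end

section
/- Gradient of the log marginal likelihood in the blur parameter (equation (3.2) of the paper, scalar parameter): let d ≥ 1, y ∈ ℝ^d, σ² > 0, let μ be a nonzero finite Borel measure on ℝ^d with finite second moment ∫ ‖x‖² dμ(x) < ∞, and let α ↦ A(α) be a continuously differentiable map from ℝ to the continuous linear maps ℝ^d → ℝ^d, with derivative A′(α). For α ∈ ℝ define f_α(x) := ‖y − A(α)x‖²/(2σ²) and L(α) := ∫_{ℝ^d} exp(−f_α(x)) dμ(x). Then for every α ∈ ℝ: 0 < L(α) ≤ μ(ℝ^d) < ∞, and the function α ↦ log L(α) is differentiable at α with derivative −(1/σ²)·∫_{ℝ^d} ⟨A′(α)x, A(α)x − y⟩·π_α(x) dμ(x), where π_α(x) := exp(−f_α(x))/L(α) is the posterior probability density with respect to μ and ⟨·,·⟩ is the Euclidean inner product; i.e. the derivative of the log marginal equals minus the posterior expectation of ∂_α f_α(x) = (1/σ²)⟨A′(α)x, A(α)x − y⟩. -/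
open MeasureTheory Real

variable {d : ℕ}

lemma key_deriv (y : EuclideanSpace ℝ (Fin d)) (σ2 : ℝ) (hσ2 : 0 < σ2)
    (A A' : ℝ → EuclideanSpace ℝ (Fin d) →L[ℝ] EuclideanSpace ℝ (Fin d))
    (hA' : ∀ a, HasDerivAt A (A' a) a) (x : EuclideanSpace ℝ (Fin d)) (t : ℝ) :
    HasDerivAt (fun s => Real.exp (-(‖y - A s x‖ ^ 2 / (2 * σ2))))
      ((-(1 / σ2)) * ((inner ℝ (A' t x) (A t x - y) : ℝ) *
        Real.exp (-(‖y - A t x‖ ^ 2 / (2 * σ2))))) t := by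
  have h1 : HasDerivAt (fun s => A s x) (A' t x) t := by
    simpa using (hA' t).clm_apply (hasDerivAt_const t x)
  have h2 : HasDerivAt (fun s => y - A s x) (-(A' t x)) t := by
    exact ((hasDerivAt_const t y).sub h1).congr_deriv (zero_sub _)
  have h3 : HasDerivAt (fun s => ‖y - A s x‖ ^ 2)
      (2 * (inner ℝ (A' t x) (A t x - y) : ℝ)) t := by
    have := h2.inner ℝ h2
    have heq : (fun s => (inner ℝ (y - A s x) (y - A s x) : ℝ)) = fun s => ‖y - A s x‖ ^ 2 := by
      funext s; rw [real_inner_self_eq_norm_sq]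
    rw [heq] at this
    refine this.congr_deriv ?_
    rw [inner_neg_left, inner_neg_right]
    have e : (inner ℝ ((A' t) x) ((A t) x - y) : ℝ) = - inner ℝ ((A' t) x) (y - (A t) x) := by
      rw [← inner_neg_right]; congr 1; abel
    rw [e, real_inner_comm (y - (A t) x)]
    ring
  have h4 : HasDerivAt (fun s => -(‖y - A s x‖ ^ 2 / (2 * σ2)))
      (-((2 * (inner ℝ (A' t x) (A t x - y) : ℝ)) / (2 * σ2))) t := (h3.div_const _).neg
  have h5 := h4.exp
  convert h5 using 1
  field_simp

/-- Gradient of the log marginal likelihood in the (scalar) blur parameter: for a nonzero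
finite Borel measure `μ` on `ℝ^d` with finite second moment and a `C¹` family of linear
operators `α ↦ A(α)`, setting `L(α) = ∫ exp(−‖y − A(α)x‖²/(2σ²)) dμ(x)`, for every `α` one
has `0 < L(α) ≤ μ(ℝ^d) < ∞` and
`(log L)'(α) = −(1/σ²)·E_{π_α}[⟨A′(α)x, A(α)x − y⟩]`. -/
theorem alpha_grad_log_marginal (d : ℕ) (hd : 1 ≤ d)
    (y : EuclideanSpace ℝ (Fin d)) (σ2 : ℝ) (hσ2 : 0 < σ2)
    (μ : Measure (EuclideanSpace ℝ (Fin d))) [IsFiniteMeasure μ] (hμ : μ ≠ 0)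
    (hmom : Integrable (fun x => ‖x‖ ^ 2) μ)
    (A A' : ℝ → EuclideanSpace ℝ (Fin d) →L[ℝ] EuclideanSpace ℝ (Fin d))
    (hA : ContDiff ℝ 1 A) (hA' : ∀ a, HasDerivAt A (A' a) a) :
    ∀ a : ℝ,
      0 < ∫ x, Real.exp (-(‖y - A a x‖ ^ 2 / (2 * σ2))) ∂μ ∧
      ∫ x, Real.exp (-(‖y - A a x‖ ^ 2 / (2 * σ2))) ∂μ ≤ (μ Set.univ).toReal ∧
      HasDerivAt
        (fun t : ℝ => Real.log (∫ x, Real.exp (-(‖y - A t x‖ ^ 2 / (2 * σ2))) ∂μ))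
        (-(1 / σ2) * ∫ x, (inner ℝ (A' a x) (A a x - y) : ℝ) *
            (Real.exp (-(‖y - A a x‖ ^ 2 / (2 * σ2))) /
              ∫ x', Real.exp (-(‖y - A a x'‖ ^ 2 / (2 * σ2))) ∂μ) ∂μ) a := by
  intro a
  set F : ℝ → EuclideanSpace ℝ (Fin d) → ℝ :=
    fun t x => Real.exp (-(‖y - A t x‖ ^ 2 / (2 * σ2))) with hF
  have hFcont : ∀ t, Continuous (F t) := by
    intro t
    exact (((continuous_const.sub (A t).continuous).norm.pow 2).div_const _).neg.rexp
  have hFle : ∀ t x, F t x ≤ 1 := by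
    intro t x
    apply Real.exp_le_one_iff.2
    have : (0:ℝ) ≤ ‖y - A t x‖ ^ 2 / (2 * σ2) := by positivity
    linarith
  have hFpos : ∀ t x, 0 < F t x := fun t x => Real.exp_pos _
  have hFint : ∀ t, Integrable (F t) μ := by
    intro t
    refine (integrable_const (1:ℝ)).mono' (hFcont t).aestronglyMeasurable ?_
    filter_upwards with x
    rw [Real.norm_eq_abs, abs_of_pos (hFpos t x)]
    exact hFle t x
  set L : ℝ → ℝ := fun t => ∫ x, F t x ∂μ with hL
  have hLpos : ∀ t, 0 < L t := by
    intro t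
    rw [hL]
    rw [integral_pos_iff_support_of_nonneg (fun x => (hFpos t x).le) (hFint t)]
    have : Function.support (F t) = Set.univ := by
      ext x; simp [Function.mem_support, (hFpos t x).ne']
    rw [this]
    simpa [Measure.measure_univ_pos] using hμ
  have hLle : ∀ t, L t ≤ (μ Set.univ).toReal := by
    intro t
    calc L t ≤ ∫ _, (1:ℝ) ∂μ := integral_mono (hFint t) (integrable_const 1) (fun x => hFle t x)
    _ = (μ Set.univ).toReal := by simp [Measure.real]
  refine ⟨hLpos a, hLle a, ?_⟩
  -- bounds on A and A' on the closed ball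
  have hAc : Continuous A := hA.continuous
  have hA'c : Continuous A' := by
    have : A' = deriv A := by funext t; exact ((hA' t).deriv).symm
    rw [this]
    exact hA.continuous_deriv le_rfl
  obtain ⟨C, hC⟩ := (isCompact_closedBall a 1).exists_bound_of_continuousOn hAc.continuousOn
  obtain ⟨C', hC'⟩ := (isCompact_closedBall a 1).exists_bound_of_continuousOn hA'c.continuousOn
  have hC0 : 0 ≤ C := le_trans (norm_nonneg _) (hC a (Metric.mem_closedBall_self zero_le_one))
  have hC'0 : 0 ≤ C' := le_trans (norm_nonneg _) (hC' a (Metric.mem_closedBall_self zero_le_one))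
  set K : ℝ := (1 / σ2) * (C' * C + C' * ‖y‖) with hK
  have hK0 : 0 ≤ K := by positivity
  set F' : ℝ → EuclideanSpace ℝ (Fin d) → ℝ :=
    fun t x => (-(1 / σ2)) * ((inner ℝ (A' t x) (A t x - y) : ℝ) * F t x) with hF'
  have hder : ∀ t x, HasDerivAt (fun s => F s x) (F' t x) t := by
    intro t x
    exact key_deriv y σ2 hσ2 A A' hA' x t
  have hF'meas : AEStronglyMeasurable (F' a) μ := by
    apply Continuous.aestronglyMeasurable
    exact continuous_const.mul
      (((A' a).continuous.inner ((A a).continuous.sub continuous_const)).mul (hFcont a))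
  have h_bound : ∀ᵐ x ∂μ, ∀ t ∈ Metric.ball a 1, ‖F' t x‖ ≤ K * (1 + ‖x‖ ^ 2) := by
    filter_upwards with x t ht
    have ht' : t ∈ Metric.closedBall a 1 := Metric.ball_subset_closedBall ht
    have h1 : ‖A t x‖ ≤ C * ‖x‖ :=
      le_trans ((A t).le_opNorm x) (mul_le_mul_of_nonneg_right (hC t ht') (norm_nonneg x))
    have h2 : ‖A' t x‖ ≤ C' * ‖x‖ :=
      le_trans ((A' t).le_opNorm x) (mul_le_mul_of_nonneg_right (hC' t ht') (norm_nonneg x))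
    have h3 : |(inner ℝ (A' t x) (A t x - y) : ℝ)| ≤ (C' * ‖x‖) * (C * ‖x‖ + ‖y‖) := by
      refine le_trans (abs_real_inner_le_norm _ _) ?_
      have : ‖A t x - y‖ ≤ C * ‖x‖ + ‖y‖ :=
        le_trans (norm_sub_le _ _) (add_le_add h1 le_rfl)
      exact mul_le_mul h2 this (norm_nonneg _) (by positivity)
    have h4 : ‖F' t x‖ = (1 / σ2) * (|(inner ℝ (A' t x) (A t x - y) : ℝ)| * F t x) := by
      rw [hF']
      rw [Real.norm_eq_abs, abs_mul, abs_mul, abs_neg, abs_of_pos (by positivity : (0:ℝ) < 1/σ2),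
        abs_of_pos (hFpos t x)]
    rw [h4]
    have hx1 : ‖x‖ ≤ 1 + ‖x‖ ^ 2 := by nlinarith [norm_nonneg x, sq_nonneg (‖x‖ - 1)]
    have hx2 : ‖x‖ ^ 2 ≤ 1 + ‖x‖ ^ 2 := by linarith [sq_nonneg ‖x‖]
    have : |(inner ℝ (A' t x) (A t x - y) : ℝ)| * F t x ≤ (C' * ‖x‖) * (C * ‖x‖ + ‖y‖) := by
      calc |(inner ℝ (A' t x) (A t x - y) : ℝ)| * F t x
          ≤ |(inner ℝ (A' t x) (A t x - y) : ℝ)| * 1 :=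
            mul_le_mul_of_nonneg_left (hFle t x) (abs_nonneg _)
        _ = _ := mul_one _
        _ ≤ _ := h3
    calc (1 / σ2) * (|(inner ℝ (A' t x) (A t x - y) : ℝ)| * F t x)
        ≤ (1 / σ2) * ((C' * ‖x‖) * (C * ‖x‖ + ‖y‖)) :=
          mul_le_mul_of_nonneg_left this (by positivity)
      _ ≤ K * (1 + ‖x‖ ^ 2) := by
          rw [hK]
          have : (C' * ‖x‖) * (C * ‖x‖ + ‖y‖) = C' * C * ‖x‖ ^ 2 + C' * ‖y‖ * ‖x‖ := by ring
          rw [this]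
          have e1 : C' * C * ‖x‖ ^ 2 ≤ C' * C * (1 + ‖x‖ ^ 2) :=
            mul_le_mul_of_nonneg_left hx2 (by positivity)
          have e2 : C' * ‖y‖ * ‖x‖ ≤ C' * ‖y‖ * (1 + ‖x‖ ^ 2) :=
            mul_le_mul_of_nonneg_left hx1 (by positivity)
          have hσ : 0 < 1 / σ2 := by positivity
          nlinarith
  have hbound_int : Integrable (fun x => K * (1 + ‖x‖ ^ 2)) μ :=
    (((integrable_const (1:ℝ)).add hmom).const_mul K)
  have hmain := hasDerivAt_integral_of_dominated_loc_of_deriv_le (μ := μ)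
    (F := F) (F' := F') (x₀ := a) (bound := fun x => K * (1 + ‖x‖ ^ 2)) (Metric.ball_mem_nhds a zero_lt_one)
    (Filter.Eventually.of_forall fun t => (hFcont t).aestronglyMeasurable)
    (hFint a) hF'meas h_bound hbound_int
    (Filter.Eventually.of_forall fun x => fun t _ => hder t x)
  obtain ⟨hF'int, hLder⟩ := hmain
  have hlog := hLder.log (hLpos a).ne'
  convert hlog using 1
  -- derivative value
  have e1 : ∫ x, F' a x ∂μ = (-(1 / σ2)) * ∫ x, (inner ℝ (A' a x) (A a x - y) : ℝ) * F a x ∂μ := by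
    rw [hF']
    exact integral_const_mul _ _
  rw [e1]
  have e2 : ∫ x, (inner ℝ (A' a x) (A a x - y) : ℝ) * (F a x / L a) ∂μ
      = (∫ x, (inner ℝ (A' a x) (A a x - y) : ℝ) * F a x ∂μ) / L a := by
    rw [← integral_div]
    congr 1
    funext x
    ring
  show -(1 / σ2) * ∫ x, (inner ℝ (A' a x) (A a x - y) : ℝ) * (F a x / L a) ∂μ = _
  rw [e2]
  ring
end
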